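/- Let π ∈ S_n with n ≥ 1 and let π_1 be its first value in one-line notation. Then: (a) ρ_{1,1}(π) has the same number of recoils as π; (b) if π_1 ≠ 1, then ρ_{1,2}(π) has the same number of recoils as π; (c) if π_1 ≠ 1, then ρ_{π_1,1}(π) has the same number of recoils as π; (d) ρ_{π_1+1,1}(π) has exactly one more recoil than π. -/

import Mathlib

/-- `w` contains the pattern `p` (both given in one-line notation):
there is a subsequence of `w` whose entries are in the same relative order
as the entries of `p`. -/
def ContainsPattern (w p : List ℕ) : Prop :=
  ∃ s : List ℕ, s.Sublist w ∧ s.length = p.length ∧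
    ∀ a b : ℕ, a < p.length → b < p.length →
      (s.getD a 0 < s.getD b 0 ↔ p.getD a 0 < p.getD b 0)

/-- `w` avoids the pattern `p`. -/
def Avoids (w p : List ℕ) : Prop := ¬ ContainsPattern w p

/-- `w` is the one-line notation of a permutation of `{1, …, n}`. -/
def IsPermList (n : ℕ) (w : List ℕ) : Prop := w.Perm (List.range' 1 n)

/-- A permutation is rectangular if it avoids 2413, 2431, 4213 and 4231. -/
def Rectangular (w : List ℕ) : Prop :=
  Avoids w [2,4,1,3] ∧ Avoids w [2,4,3,1] ∧ Avoids w [4,2,1,3] ∧ Avoids w [4,2,3,1]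

/-- A permutation is evil-avoiding if it avoids 2413, 4132, 4213 and 3214. -/
def EvilAvoiding (w : List ℕ) : Prop :=
  Avoids w [2,4,1,3] ∧ Avoids w [4,1,3,2] ∧ Avoids w [4,2,1,3] ∧ Avoids w [3,2,1,4]

/-- The number of recoils of `w`: the number of values `i ∈ {1,…,n-1}`
that occur after `i+1` in the one-line notation `w`. -/
def recoils (w : List ℕ) : ℕ :=
  ((Finset.Icc 1 (w.length - 1)).filter (fun i => w.idxOf (i+1) < w.idxOf i)).card

/-- The insertion operator ρ_{i,j} (with 1-indexed position `j`): increment by 1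
every value of `w` that is ≥ i, then insert the value `i` in position `j`. -/
def insOp (i j : ℕ) (w : List ℕ) : List ℕ :=
  List.insertIdx (w.map (fun v => if i ≤ v then v + 1 else v)) (j-1) i

/-! Recoils only see the relative positions of consecutive values. Putting `j + 1` in front of
`π` and shifting the larger values up keeps every pair `(k, k + 1)` with `k < j`, moves the pair
`(k, k + 1)` with `k > j` to `(k + 1, k + 2)`, destroys the pair `(j, j + 1)`, and creates the
pairs `(j, j + 1)`, always a recoil, and `(j + 1, j + 2)`, never one. For `j + 1 = π₁` the
destroyed pair was a recoil of `π`, for `j = π₁` it was not; for `j = 0` the pairs involving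
the value `0` do not count, so the recoils are just shifted up. Finally `ρ_{1,2}(π)` is `ρ_{1,1}(π)` with its first two entries `1` and `π₁ + 1` swapped, and
swapping adjacent entries that are not consecutive values does not change the recoils. -/

open Finset

def shiftFrom (i v : ℕ) : ℕ := if i ≤ v then v + 1 else v

theorem shiftFrom_injective (i : ℕ) : Function.Injective (shiftFrom i) := by
  intro x y h
  unfold shiftFrom at h
  split_ifs at h <;> omega

theorem mem_image_shiftFrom {s : Finset ℕ} {i k : ℕ} :
    k ∈ s.image (shiftFrom i) ↔ k < i ∧ k ∈ s ∨ i < k ∧ k - 1 ∈ s := by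
  simp only [mem_image, shiftFrom]
  constructor
  · rintro ⟨x, hx, rfl⟩
    split_ifs <;> simp_all
  · rintro (⟨hk, hks⟩ | ⟨hk, hks⟩)
    · exact ⟨k, hks, if_neg (by omega)⟩
    · exact ⟨k - 1, hks, by rw [if_pos (by omega)]; omega⟩

theorem List.idxOf_map_of_injective {α β : Type*} [DecidableEq α] [DecidableEq β] {f : α → β}
    (hf : Function.Injective f) (l : List α) (a : α) : (l.map f).idxOf (f a) = l.idxOf a := by
  induction l with
  | nil => rfl
  | cons b l ih =>
    simp only [List.map_cons, List.idxOf_cons, cond_eq_ite, beq_iff_eq, hf.eq_iff, ih]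

theorem insOp_one (i : ℕ) (w : List ℕ) : insOp i 1 w = i :: w.map (shiftFrom i) := rfl

theorem insOp_two_cons (i a : ℕ) (t : List ℕ) :
    insOp i 2 (a :: t) = shiftFrom i a :: i :: t.map (shiftFrom i) := rfl

section Positions

variable {i v : ℕ} (w : List ℕ)

theorem idxOf_insOp_one_self : (insOp i 1 w).idxOf i = 0 := List.idxOf_cons_self

theorem idxOf_insOp_one_of_lt (hv : v < i) : (insOp i 1 w).idxOf v = w.idxOf v + 1 := by
  have hfix : shiftFrom i v = v := if_neg (by omega)
  rw [insOp_one, List.idxOf_cons_ne _ hv.ne',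
    ← List.idxOf_map_of_injective (shiftFrom_injective i) w v, hfix]

theorem idxOf_insOp_one_succ (hv : i ≤ v) : (insOp i 1 w).idxOf (v + 1) = w.idxOf v + 1 := by
  have hshift : shiftFrom i v = v + 1 := if_pos hv
  rw [insOp_one, List.idxOf_cons_ne _ (by omega),
    ← List.idxOf_map_of_injective (shiftFrom_injective i) w v, hshift]

end Positions

def recoilSet (w : List ℕ) : Finset ℕ :=
  (Icc 1 (w.length - 1)).filter (fun i => w.idxOf (i + 1) < w.idxOf i)

theorem card_recoilSet (w : List ℕ) : (recoilSet w).card = recoils w := rfl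

theorem mem_recoilSet {w : List ℕ} {k : ℕ} :
    k ∈ recoilSet w ↔ 1 ≤ k ∧ k < w.length ∧ w.idxOf (k + 1) < w.idxOf k := by
  simp only [recoilSet, mem_filter, mem_Icc]
  omega

theorem length_insOp_one (i : ℕ) (w : List ℕ) : (insOp i 1 w).length = w.length + 1 := by
  simp [insOp_one]

theorem recoilSet_cons_cons_comm {x y : ℕ} (hxy : x + 1 ≠ y) (hyx : y + 1 ≠ x) (l : List ℕ) :
    recoilSet (x :: y :: l) = recoilSet (y :: x :: l) := by
  ext k
  simp only [mem_recoilSet, List.length_cons, List.idxOf_cons, beq_iff_eq, cond_eq_ite]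
  split_ifs <;> omega

theorem recoilSet_insOp_one_one (w : List ℕ) :
    recoilSet (insOp 1 1 w) = (recoilSet w).image (shiftFrom 0) := by
  ext k
  rcases k with _ | _ | k <;>
    simp only [mem_image_shiftFrom, mem_recoilSet, length_insOp_one, add_tsub_cancel_right]
  · omega
  · rw [idxOf_insOp_one_self]
    omega
  · rw [idxOf_insOp_one_succ w (by omega : 1 ≤ k + 1 + 1),
      idxOf_insOp_one_succ w (by omega : 1 ≤ k + 1)]
    omega

theorem recoilSet_insOp_succ_one {j : ℕ} (hj : 1 ≤ j) {w : List ℕ} (hjw : j ≤ w.length) :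
    recoilSet (insOp (j + 1) 1 w) = insert j (((recoilSet w).erase j).image (shiftFrom j)) := by
  ext k
  simp only [mem_insert, mem_image_shiftFrom, mem_erase, mem_recoilSet, length_insOp_one]
  rcases lt_trichotomy k j with hk | rfl | hk
  · rw [idxOf_insOp_one_of_lt w (by omega : k + 1 < j + 1),
      idxOf_insOp_one_of_lt w (by omega : k < j + 1)]
    omega
  · rw [idxOf_insOp_one_self, idxOf_insOp_one_of_lt w (Nat.lt_add_one k)]
    omega
  · obtain ⟨k, rfl⟩ : ∃ k', k = k' + 1 := ⟨k - 1, by omega⟩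
    rw [add_tsub_cancel_right]
    rcases (Nat.lt_succ_iff.mp hk).eq_or_lt with rfl | hk
    · rw [idxOf_insOp_one_self]
      omega
    · rw [idxOf_insOp_one_succ w (by omega : j + 1 ≤ k + 1),
        idxOf_insOp_one_succ w (by omega : j + 1 ≤ k)]
      omega

theorem recoils_insOp_one_one (w : List ℕ) : recoils (insOp 1 1 w) = recoils w := by
  rw [← card_recoilSet, recoilSet_insOp_one_one, card_image_of_injective _ (shiftFrom_injective 0),
    card_recoilSet]

theorem recoils_insOp_succ_one {j : ℕ} (hj : 1 ≤ j) {w : List ℕ} (hjw : j ≤ w.length) :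
    recoils (insOp (j + 1) 1 w) = ((recoilSet w).erase j).card + 1 := by
  have hj_notMem : j ∉ ((recoilSet w).erase j).image (shiftFrom j) := by
    rw [mem_image_shiftFrom]
    omega
  rw [← card_recoilSet, recoilSet_insOp_succ_one hj hjw, card_insert_of_notMem hj_notMem,
    card_image_of_injective _ (shiftFrom_injective j)]

theorem recoils_insOp_one_two_cons {a : ℕ} (ha : 2 ≤ a) (t : List ℕ) :
    recoils (insOp 1 2 (a :: t)) = recoils (a :: t) := by
  have hshift : shiftFrom 1 a = a + 1 := if_pos (by omega)
  rw [insOp_two_cons, ← card_recoilSet,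
    recoilSet_cons_cons_comm (by rw [hshift]; omega) (by rw [hshift]; omega), card_recoilSet,
    ← List.map_cons, ← insOp_one, recoils_insOp_one_one]

theorem recoils_insOp_head_cons {a : ℕ} (ha : 2 ≤ a) {t : List ℕ} (hat : a ≤ (a :: t).length) :
    recoils (insOp a 1 (a :: t)) = recoils (a :: t) := by
  obtain ⟨j, rfl⟩ : ∃ j, a = j + 1 := ⟨a - 1, by omega⟩
  have hj : j ∈ recoilSet ((j + 1) :: t) := by
    rw [mem_recoilSet, List.idxOf_cons_self, List.idxOf_cons_ne _ (by omega)]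
    omega
  rw [recoils_insOp_succ_one (by omega) (by omega), card_erase_add_one hj, card_recoilSet]

theorem recoils_insOp_head_succ_cons {a : ℕ} (ha : 1 ≤ a) {t : List ℕ}
    (hat : a ≤ (a :: t).length) :
    recoils (insOp (a + 1) 1 (a :: t)) = recoils (a :: t) + 1 := by
  have ha_notMem : a ∉ recoilSet (a :: t) := by
    rw [mem_recoilSet, List.idxOf_cons_self]
    omega
  rw [recoils_insOp_succ_one ha hat, erase_eq_of_notMem ha_notMem, card_recoilSet]

/-- Let `π ∈ S_n`, `n ≥ 1`, with first value `π₁ = w.headI`. Then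
(a) `ρ_{1,1}(π)` has the same number of recoils as `π`;
(b) if `π₁ ≠ 1` then `ρ_{1,2}(π)` has the same number of recoils as `π`;
(c) if `π₁ ≠ 1` then `ρ_{π₁,1}(π)` has the same number of recoils as `π`;
(d) `ρ_{π₁+1,1}(π)` has exactly one more recoil than `π`. -/
theorem insOp_recoils (n : ℕ) (hn : 1 ≤ n) (w : List ℕ) (hperm : IsPermList n w) :
    recoils (insOp 1 1 w) = recoils w ∧
    (w.headI ≠ 1 → recoils (insOp 1 2 w) = recoils w) ∧
    (w.headI ≠ 1 → recoils (insOp w.headI 1 w) = recoils w) ∧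
    recoils (insOp (w.headI + 1) 1 w) = recoils w + 1 := by
  have hlen : w.length = n := by simpa using hperm.length_eq
  obtain ⟨a, t, rfl⟩ := List.exists_cons_of_length_pos (by omega : 0 < w.length)
  have ha : 1 ≤ a ∧ a < 1 + n := by simpa using hperm.subset List.mem_cons_self
  rw [List.headI_cons]
  refine ⟨recoils_insOp_one_one _, fun ha1 => recoils_insOp_one_two_cons (by omega) t,
    fun ha1 => recoils_insOp_head_cons (by omega) (by omega),
    recoils_insOp_head_succ_cons ha.1 (by omega)⟩
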